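/- arXiv:1902.10543 — 4 statements merged into one kernel-verified Lean document; each statement's English description precedes it below -/
import Mathlib

section
/- For every natural number α ≥ 1 and every β with 0 ≤ β ≤ α, the number a = 5^α·2^α − 5^β satisfies 5^(2α−1)·2^(2α−1) < a² < 10^(2α); in particular a² has exactly 2α decimal digits. -/
theorem stmt_3 (α β : ℕ) (hα : 1 ≤ α) (hβ : β ≤ α)
    (a : ℕ) (ha : a = 5 ^ α * 2 ^ α - 5 ^ β) :
    5 ^ (2 * α - 1) * 2 ^ (2 * α - 1) < a ^ 2 ∧ a ^ 2 < 10 ^ (2 * α) ∧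
    10 ^ (2 * α - 1) ≤ a ^ 2 := by
  have h10 : (5 : ℕ) ^ α * 2 ^ α = 10 ^ α := by
    rw [← mul_pow]; norm_num
  have h10' : (5 : ℕ) ^ (2 * α - 1) * 2 ^ (2 * α - 1) = 10 ^ (2 * α - 1) := by
    rw [← mul_pow]; norm_num
  have ha' : a = 10 ^ α - 5 ^ β := by rw [ha, h10]
  have h5β : (5 : ℕ) ^ β ≤ 5 ^ α := Nat.pow_le_pow_right (by norm_num) hβ
  have h2 : 2 ≤ 2 ^ α := by
    calc 2 = 2 ^ 1 := rfl
    _ ≤ 2 ^ α := Nat.pow_le_pow_right (by norm_num) hα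
  have h5α : 2 * 5 ^ α ≤ 10 ^ α := by
    calc 2 * 5 ^ α ≤ 2 ^ α * 5 ^ α := Nat.mul_le_mul_right _ h2
    _ = 10 ^ α := by rw [← mul_pow]; norm_num
  have hβpos : 1 ≤ (5 : ℕ) ^ β := Nat.one_le_pow _ _ (by norm_num)
  have halt : a < 10 ^ α := by omega
  have hage : 10 ^ α ≤ 2 * a := by omega
  have hsq : a ^ 2 < 10 ^ (2 * α) := by
    have : a ^ 2 < (10 ^ α) ^ 2 := Nat.pow_lt_pow_left halt (by norm_num)
    calc a ^ 2 < (10 ^ α) ^ 2 := this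
    _ = 10 ^ (2 * α) := by rw [← pow_mul, mul_comm]
  have hX : 10 * 10 ^ (2 * α - 1) = 10 ^ (2 * α) := by
    have : 2 * α - 1 + 1 = 2 * α := by omega
    rw [← pow_succ']
    rw [this]
  have h4 : 10 ^ (2 * α) ≤ 4 * a ^ 2 := by
    have := Nat.mul_le_mul hage hage
    calc 10 ^ (2 * α) = (10 ^ α) ^ 2 := by rw [← pow_mul, mul_comm]
    _ = 10 ^ α * 10 ^ α := sq (10 ^ α)
    _ ≤ (2 * a) * (2 * a) := this
    _ = 4 * a ^ 2 := by ring
  have hXpos : 1 ≤ 10 ^ (2 * α - 1) := Nat.one_le_pow _ _ (by norm_num)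
  exact ⟨by rw [h10']; omega, hsq, by omega⟩
end

section
/- There exist infinitely many perfect squares N not divisible by 10 such that N = b·10^d + a for some perfect squares a and b, neither divisible by 10, where a has exactly d decimal digits. Precisely: for every natural number M there exists such an N with N > M. -/
/-!
If `t = 2 (y + 1)` then `(t y + 1)² = y² t² + (2 y + 1)²`. Taking `t = 10 ^ k` makes the
right-hand side the decimal concatenation of `y²` with `(10 ^ k - 1)²`, a square with exactly `2 k`
digits (e.g. `41² = 16|81`, `4901² = 2401|9801`). With `y = 5 · 10 ^ (k - 1) - 1` the number `y` is
prime to `5` while `2 y + 1` and `t y + 1` are odd, so none of the three squares is divisible by `10`.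
-/

theorem sq_two_mul_add_two_mul_add_one {R : Type*} [CommSemiring R] (y : R) :
    ((2 * y + 2) * y + 1) ^ 2 = y ^ 2 * (2 * y + 2) ^ 2 + (2 * y + 1) ^ 2 := by
  ring

lemma not_ten_dvd_of_odd {m : ℕ} (hm : Odd m) : ¬ 10 ∣ m := fun h =>
  Nat.not_even_iff_odd.2 hm (even_iff_two_dvd.2 ((by norm_num : 2 ∣ 10).trans h))

lemma not_ten_dvd_sq_of_not_five_dvd {y : ℕ} (hy : ¬ 5 ∣ y) : ¬ 10 ∣ y ^ 2 := fun h =>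
  hy (Nat.prime_five.dvd_of_dvd_pow ((by norm_num : 5 ∣ 10).trans h))

lemma pow_le_sq_two_mul_add_one {n y : ℕ} (hy : y + 1 = 5 * 10 ^ n) :
    10 ^ (2 * n + 1) ≤ (2 * y + 1) ^ 2 := by
  have hlow : 9 * 10 ^ n ≤ 2 * y + 1 := by
    have := Nat.one_le_pow n 10 (by norm_num)
    omega
  calc 10 ^ (2 * n + 1) = 10 * (10 ^ n) ^ 2 := by ring
    _ ≤ (9 * 10 ^ n) ^ 2 := by nlinarith
    _ ≤ (2 * y + 1) ^ 2 := by gcongr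

lemma sq_two_mul_add_one_lt_pow {n y : ℕ} (hy : y + 1 = 5 * 10 ^ n) :
    (2 * y + 1) ^ 2 < 10 ^ (2 * n + 2) := by
  have hlt : 2 * y + 1 < 10 ^ (n + 1) := by rw [pow_succ]; omega
  calc (2 * y + 1) ^ 2 < (10 ^ (n + 1)) ^ 2 := by gcongr
    _ = 10 ^ (2 * n + 2) := by ring

theorem stmt_5 :
    ∀ M : ℕ, ∃ N : ℕ, N > M ∧ (∃ z, N = z ^ 2) ∧ ¬ (10 ∣ N) ∧
      ∃ a b d : ℕ, (∃ u, a = u ^ 2) ∧ (∃ v, b = v ^ 2) ∧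
        ¬ (10 ∣ a) ∧ ¬ (10 ∣ b) ∧
        10 ^ (d - 1) ≤ a ∧ a < 10 ^ d ∧
        N = b * 10 ^ d + a := by
  intro M
  obtain ⟨y, hy⟩ : ∃ y, y + 1 = 5 * 10 ^ M :=
    ⟨5 * 10 ^ M - 1, Nat.sub_add_cancel (Nat.one_le_iff_ne_zero.2 (by positivity))⟩
  have ht : (2 * y + 2) ^ 2 = 10 ^ (2 * M + 2) := by
    rw [show 2 * y + 2 = 10 ^ (M + 1) by rw [pow_succ]; omega]; ring
  have hM : M < y := by have := Nat.lt_pow_self (by norm_num : 1 < 10) (n := M); omega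
  refine ⟨((2 * y + 2) * y + 1) ^ 2, ?_, ⟨_, rfl⟩, ?_, (2 * y + 1) ^ 2, y ^ 2, 2 * M + 2,
    ⟨_, rfl⟩, ⟨_, rfl⟩, ?_, ?_, pow_le_sq_two_mul_add_one hy, sq_two_mul_add_one_lt_pow hy, ?_⟩
  · calc M < (2 * y + 2) * y + 1 := by nlinarith
      _ ≤ ((2 * y + 2) * y + 1) ^ 2 := Nat.le_self_pow two_ne_zero _
  · exact not_ten_dvd_of_odd (Odd.pow ⟨y * (y + 1), by ring⟩)
  · exact not_ten_dvd_of_odd (Odd.pow (odd_two_mul_add_one y))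
  · exact not_ten_dvd_sq_of_not_five_dvd (by omega)
  · rw [← ht, sq_two_mul_add_two_mul_add_one]
end

section
/- For every natural number α > 2, let a = 5^α·2^α − 2^(α−1), n = 2^(α−1), x = (a−n)(a+n)/(2n), a₀ = a/2, x₀ = x/2. Then x₀² + a₀² divides x² + a², and both are perfect squares not divisible by 10. -/
theorem stmt_6 (α : ℕ) (hα : 2 < α)
    (a n x a₀ x₀ : ℕ) (ha : a = 5 ^ α * 2 ^ α - 2 ^ (α - 1)) (hn : n = 2 ^ (α - 1))
    (hx : x = (a - n) * (a + n) / (2 * n)) (ha₀ : a₀ = a / 2) (hx₀ : x₀ = x / 2) :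
    (x₀ ^ 2 + a₀ ^ 2) ∣ (x ^ 2 + a ^ 2) ∧
    (∃ z, x ^ 2 + a ^ 2 = z ^ 2) ∧ ¬ (10 ∣ x ^ 2 + a ^ 2) ∧
    (∃ w, x₀ ^ 2 + a₀ ^ 2 = w ^ 2) ∧ ¬ (10 ∣ x₀ ^ 2 + a₀ ^ 2) := by
  obtain ⟨β, rfl⟩ : ∃ β, α = β + 3 := ⟨α - 3, by omega⟩
  set p : ℕ := 2 ^ β with hp
  have hp0 : 0 < p := pow_pos (by norm_num) β
  have h5 : 0 < 5 ^ β := pow_pos (by norm_num) β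
  obtain ⟨r, hr⟩ : ∃ r, 125 * 5 ^ β = r + 1 := ⟨125 * 5 ^ β - 1, by omega⟩
  -- a = 8 r p + 4 p
  have e1 : (5:ℕ) ^ (β + 3) * 2 ^ (β + 3) = (125 * 5 ^ β) * (8 * p) := by
    rw [hp]; ring
  have e2 : (2:ℕ) ^ (β + 3 - 1) = 4 * p := by
    rw [hp, show β + 3 - 1 = β + 2 from rfl]; ring
  rw [e1, e2, hr] at ha
  have e3 : (r + 1) * (8 * p) = 8 * (r * p) + 4 * p + 4 * p := by ring
  rw [e3] at ha
  have hA : a = 8 * (r * p) + 4 * p := by omega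
  rw [e2] at hn
  -- x
  have hsub : a - n = 8 * (r * p) := by omega
  have hadd : a + n = 8 * (r * p) + 8 * p := by omega
  rw [hsub, hadd, hn] at hx
  have e4 : 8 * (r * p) * (8 * (r * p) + 8 * p) = (2 * (4 * p)) * (8 * (r * r * p) + 8 * (r * p)) := by
    ring
  rw [e4, Nat.mul_div_cancel_left _ (by positivity)] at hx
  -- halves
  have hA0 : a₀ = 4 * (r * p) + 2 * p := by
    rw [ha₀, hA, show 8 * (r * p) + 4 * p = 2 * (4 * (r * p) + 2 * p) from by ring,
      Nat.mul_div_cancel_left _ (by norm_num)]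
  have hX0 : x₀ = 4 * (r * r * p) + 4 * (r * p) := by
    rw [hx₀, hx, show 8 * (r * r * p) + 8 * (r * p) = 2 * (4 * (r * r * p) + 4 * (r * p)) from by ring,
      Nat.mul_div_cancel_left _ (by norm_num)]
  -- key facts
  have key : x ^ 2 + a ^ 2 = (4 * p * (2 * r * r + 2 * r + 1)) ^ 2 := by
    rw [hx, hA]; ring
  have key0 : x₀ ^ 2 + a₀ ^ 2 = (2 * p * (2 * r * r + 2 * r + 1)) ^ 2 := by
    rw [hX0, hA0]; ring
  -- mod 5 fact
  have h5r : (2 * r * r + 2 * r + 1) % 5 = 1 := by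
    obtain ⟨k, hk⟩ : ∃ k, r + 1 = 5 * k := ⟨25 * 5 ^ β, by omega⟩
    have : 2 * r * r + 2 * r + 1 = 5 * (2 * (r * k)) + 1 := by
      calc 2 * r * r + 2 * r + 1 = 2 * r * (r + 1) + 1 := by ring
        _ = 2 * r * (5 * k) + 1 := by rw [hk]
        _ = 5 * (2 * (r * k)) + 1 := by ring
    omega
  have h5p : ¬ (5 ∣ p) := by
    intro h
    have := Nat.Prime.dvd_of_dvd_pow (p := 5) (by norm_num) (hp ▸ h)
    omega
  have hnd : ∀ c : ℕ, ¬ (5 ∣ c * p * (2 * r * r + 2 * r + 1)) → True := fun _ _ => trivial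
  have not5 : ∀ c : ℕ, ¬ (5 ∣ c) → ¬ (10 ∣ (c * p * (2 * r * r + 2 * r + 1)) ^ 2) := by
    intro c hc h10
    have h5d : (5:ℕ) ∣ (c * p * (2 * r * r + 2 * r + 1)) ^ 2 := dvd_trans (by norm_num) h10
    have h5d' : (5:ℕ) ∣ c * p * (2 * r * r + 2 * r + 1) :=
      Nat.Prime.dvd_of_dvd_pow (by norm_num) h5d
    rcases (Nat.Prime.dvd_mul (by norm_num)).mp h5d' with h | h
    · rcases (Nat.Prime.dvd_mul (by norm_num)).mp h with h | h
      · exact hc h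
      · exact h5p h
    · omega
  refine ⟨?_, ⟨_, key⟩, ?_, ⟨_, key0⟩, ?_⟩
  · refine ⟨4, ?_⟩
    rw [key, key0]; ring
  · rw [key]; exact not5 4 (by norm_num)
  · rw [key0]; exact not5 2 (by norm_num)
end

section
/- For every natural number s, there exist infinitely many perfect squares N not divisible by 10 such that N = b·10^(d+s) + a for some perfect squares a and b neither divisible by 10, where a has exactly d decimal digits (i.e., N is obtained by writing b, then s zeros, then a in decimal). -/
/-- `10 ^ K` is not a square when `K` is odd. -/
lemma aux_not_isSquare (K : ℕ) (hK : Odd K) : ¬ IsSquare ((10 : ℤ) ^ K) := by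
  rintro ⟨t, ht⟩
  have ht0 : t ≠ 0 := by
    rintro rfl
    have : ((10:ℤ)) ^ K = 0 := by simpa using ht
    exact pow_ne_zero K (by norm_num : (10:ℤ) ≠ 0) this
  have hnat : t.natAbs * t.natAbs = 10 ^ K := by
    have := congrArg Int.natAbs ht
    simpa [Int.natAbs_mul, Int.natAbs_pow] using this.symm
  have htn0 : t.natAbs ≠ 0 := by simpa using ht0
  have h1 : (10 ^ K : ℕ).factorization 2 = K := by
    rw [Nat.factorization_pow]
    have h10 : (10 : ℕ).factorization 2 = 1 := by
      rw [show (10 : ℕ) = 2 * 5 by norm_num,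
        Nat.factorization_mul (by norm_num) (by norm_num),
        Nat.Prime.factorization (by norm_num), Nat.Prime.factorization (by norm_num)]
      simp
    simp [h10]
  have h2 : (t.natAbs * t.natAbs).factorization 2 = 2 * t.natAbs.factorization 2 := by
    rw [Nat.factorization_mul htn0 htn0]
    simp [two_mul]
  rw [hnat, h1] at h2
  obtain ⟨j, hj⟩ := hK
  omega

/-- Squaring a Pell solution. -/
lemma aux_pell_step (D x y : ℕ) (h : x ^ 2 = D * y ^ 2 + 1) :
    (x ^ 2 + D * y ^ 2) ^ 2 = D * (2 * x * y) ^ 2 + 1 := by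
  zify at h ⊢
  linear_combination ((x:ℤ) ^ 2 - (D:ℤ) * (y:ℤ) ^ 2 + 1) * h

/-- There are arbitrarily large Pell solutions. -/
lemma aux_pell_large (D : ℕ) (hD : 2 ≤ D) (x0 y0 : ℕ) (h0 : x0 ^ 2 = D * y0 ^ 2 + 1)
    (hy0 : 0 < y0) : ∀ n : ℕ, ∃ x y : ℕ, 0 < y ∧ x ^ 2 = D * y ^ 2 + 1 ∧ n ≤ x := by
  intro n
  induction n with
  | zero => exact ⟨x0, y0, hy0, h0, Nat.zero_le _⟩
  | succ k ih =>
    obtain ⟨x, y, hy, h, hx⟩ := ih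
    have hx2 : 2 ≤ x := by nlinarith
    refine ⟨x ^ 2 + D * y ^ 2, 2 * x * y, by positivity, aux_pell_step D x y h, ?_⟩
    nlinarith

/-- Choice of a square `u^2` with exactly `d` digits, `u` odd and coprime to 5. -/
lemma aux_choose_u (d : ℕ) (hd : 3 ≤ d) :
    ∃ u : ℕ, Odd u ∧ ¬ (5 ∣ u) ∧ 10 ^ (d - 1) ≤ u ^ 2 ∧ u ^ 2 < 10 ^ d := by
  rcases Nat.even_or_odd d with he | ho
  · -- d = e + e with e ≥ 2 ; take u = 10^e - 1
    obtain ⟨e, rfl⟩ := he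
    have he2 : 2 ≤ e := by omega
    have h1 : 1 ≤ (10:ℕ) ^ e := Nat.one_le_pow _ _ (by norm_num)
    have h10 : (10:ℕ) ^ e ≥ 10 := by
      calc (10:ℕ)^e ≥ 10^1 := Nat.pow_le_pow_right (by norm_num) (by omega)
        _ = 10 := pow_one 10
    have h2d : (2:ℕ) ∣ 10 ^ e := dvd_pow (by norm_num) (by omega)
    have h5d : (5:ℕ) ∣ 10 ^ e := dvd_pow (by norm_num) (by omega)
    refine ⟨10 ^ e - 1, ?_, ?_, ?_, ?_⟩
    · obtain ⟨c, hc⟩ := h2d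
      exact ⟨c - 1, by omega⟩
    · intro h5
      obtain ⟨c, hc⟩ := h5d
      obtain ⟨c', hc'⟩ := h5
      omega
    · have hsplit2 : (10:ℕ) ^ (e - 1) * 10 = 10 ^ e := by
        rw [← pow_succ]; congr 1; omega
      have hsplit : (10:ℕ) ^ (e + e - 1) = 10 ^ (e-1) * 10 ^ e := by
        rw [show e + e - 1 = (e - 1) + e by omega, pow_add]
      rw [hsplit]
      have hx : 10 ^ (e-1) * 4 ≤ 10 ^ e - 1 := by omega
      calc 10 ^ (e-1) * 10 ^ e ≤ (10 ^ (e-1) * 4) * (10 ^ (e-1) * 4) := by nlinarith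
        _ ≤ (10 ^ e - 1) * (10 ^ e - 1) := Nat.mul_le_mul hx hx
        _ = (10 ^ e - 1) ^ 2 := (sq _).symm
    · have hlt : 10 ^ e - 1 < 10 ^ e := by omega
      calc (10 ^ e - 1) ^ 2 < (10 ^ e) ^ 2 := Nat.pow_lt_pow_left hlt (by norm_num)
        _ = 10 ^ (e + e) := by rw [← pow_mul]; congr 1; omega
  · -- d = 2e + 1 with e ≥ 1 ; take u = 3 * 10^e + 1
    obtain ⟨e, rfl⟩ := ho
    have he1 : 1 ≤ e := by omega
    have h10 : (10:ℕ) ^ e ≥ 10 := by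
      calc (10:ℕ)^e ≥ 10^1 := Nat.pow_le_pow_right (by norm_num) (by omega)
        _ = 10 := pow_one 10
    have h2d : (2:ℕ) ∣ 3 * 10 ^ e := Dvd.dvd.mul_left (dvd_pow (by norm_num) (by omega)) 3
    have h5d : (5:ℕ) ∣ 3 * 10 ^ e := Dvd.dvd.mul_left (dvd_pow (by norm_num) (by omega)) 3
    refine ⟨3 * 10 ^ e + 1, ?_, ?_, ?_, ?_⟩
    · obtain ⟨c, hc⟩ := h2d
      exact ⟨c, by omega⟩
    · intro h5
      obtain ⟨c, hc⟩ := h5d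
      obtain ⟨c', hc'⟩ := h5
      omega
    · rw [show 2*e+1-1 = e + e by omega, pow_add]
      nlinarith
    · rw [show 2*e+1 = e + e + 1 by omega, pow_add, pow_add, pow_one]
      nlinarith

theorem stmt_13 (s : ℕ) :
    ∀ M : ℕ, ∃ N : ℕ, N > M ∧ (∃ z, N = z ^ 2) ∧ ¬ (10 ∣ N) ∧
      ∃ a b d : ℕ, (∃ u, a = u ^ 2) ∧ (∃ v, b = v ^ 2) ∧
        ¬ (10 ∣ a) ∧ ¬ (10 ∣ b) ∧
        10 ^ (d - 1) ≤ a ∧ a < 10 ^ d ∧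
        N = b * 10 ^ (d + s) + a := by
  intro M
  set K : ℕ := 2 * s + 3 with hK
  clear_value K
  -- Pell solution over ℤ
  obtain ⟨X, Y, hXY, hYne⟩ := Pell.exists_of_not_isSquare
    (by positivity : (0:ℤ) < (10:ℤ) ^ K) (aux_not_isSquare K ⟨s + 1, by omega⟩)
  -- natify the solution
  have hXYnat : X.natAbs ^ 2 = 10 ^ K * Y.natAbs ^ 2 + 1 := by
    have hz : ((X.natAbs : ℤ)) ^ 2 = (10:ℤ) ^ K * ((Y.natAbs : ℤ)) ^ 2 + 1 := by
      rw [Int.natAbs_sq, Int.natAbs_sq]; linarith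
    exact_mod_cast hz
  have hYnat : 0 < Y.natAbs := Int.natAbs_pos.mpr hYne
  have hD2 : 2 ≤ 10 ^ K := by
    calc (2:ℕ) ≤ 10 ^ 1 := by norm_num
      _ ≤ 10 ^ K := Nat.pow_le_pow_right (by norm_num) (by omega)
  -- a large solution
  obtain ⟨x, y, hy, hsol, hxM⟩ :=
    aux_pell_large (10 ^ K) hD2 X.natAbs Y.natAbs hXYnat hYnat (M + 1)
  -- extract powers of 10 from y
  obtain ⟨m, y', hy', hyfac⟩ :=
    Nat.exists_eq_pow_mul_and_not_dvd (by omega : y ≠ 0) 10 (by norm_num)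
  -- choose u
  set d : ℕ := s + 3 + 2 * m with hd
  obtain ⟨u, huodd, hu5, hua1, hua2⟩ := aux_choose_u d (by omega)
  have hu1 : 1 ≤ u := huodd.pos
  -- oddness of x
  have h2K : (2:ℕ) ∣ 10 ^ K * y ^ 2 :=
    Dvd.dvd.mul_right (dvd_pow (by norm_num) (by omega)) _
  have hxodd : Odd x := by
    rcases Nat.even_or_odd x with hev | hod
    · exfalso
      obtain ⟨c, hc⟩ := hev
      have hpar : x ^ 2 = 2 * (2 * (c * c)) := by rw [hc]; ring
      obtain ⟨q, hq⟩ : ∃ q, c * c = q := ⟨_, rfl⟩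
      obtain ⟨c', hc'⟩ := h2K
      rw [hq] at hpar
      omega
    · exact hod
  have hy'0 : 0 < y' := by
    rcases Nat.eq_zero_or_pos y' with h0 | h; · simp [h0] at hy'
    exact h
  refine ⟨(u * x) ^ 2, ?_, ⟨u * x, rfl⟩, ?_, u ^ 2, (u * y') ^ 2, d,
    ⟨u, rfl⟩, ⟨u * y', rfl⟩, ?_, ?_, hua1, hua2, ?_⟩
  · -- N > M
    have : M + 1 ≤ x := hxM
    calc M < M + 1 := Nat.lt_succ_self M
      _ ≤ x := hxM
      _ ≤ u * x := Nat.le_mul_of_pos_left x hu1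
      _ ≤ (u * x) ^ 2 := Nat.le_self_pow (by norm_num) _
  · -- ¬ 10 ∣ N
    intro hdvd
    have h2 : (2:ℕ) ∣ (u * x) ^ 2 := dvd_trans (by norm_num) hdvd
    have : Odd ((u * x) ^ 2) := (huodd.mul hxodd).pow
    exact (Nat.not_even_iff_odd.mpr this) (even_iff_two_dvd.mpr h2)
  · -- ¬ 10 ∣ a
    intro hdvd
    have h2 : (2:ℕ) ∣ u ^ 2 := dvd_trans (by norm_num) hdvd
    exact (Nat.not_even_iff_odd.mpr huodd.pow) (even_iff_two_dvd.mpr h2)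
  · -- ¬ 10 ∣ b
    intro hdvd
    rcases Nat.even_or_odd y' with hev | hod
    · -- y' even, so 5 ∤ y', so 5 ∤ b; but 10 ∣ b gives 5 ∣ b
      have h5y' : ¬ (5:ℕ) ∣ y' := by
        intro h5
        exact hy' (Nat.Coprime.mul_dvd_of_dvd_of_dvd (by norm_num)
          (even_iff_two_dvd.mp hev) h5)
      have h5b : (5:ℕ) ∣ (u * y') ^ 2 := dvd_trans (by norm_num) hdvd
      have := (Nat.Prime.dvd_of_dvd_pow (by norm_num : Nat.Prime 5) h5b)
      rcases (Nat.Prime.dvd_mul (by norm_num : Nat.Prime 5)).mp this with h | h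
      · exact hu5 h
      · exact h5y' h
    · have h2 : (2:ℕ) ∣ (u * y') ^ 2 := dvd_trans (by norm_num) hdvd
      exact (Nat.not_even_iff_odd.mpr (huodd.mul hod).pow) (even_iff_two_dvd.mpr h2)
  · -- the decomposition
    have hds : d + s = K + 2 * m := by omega
    calc (u * x) ^ 2 = u ^ 2 * x ^ 2 := by ring
      _ = u ^ 2 * (10 ^ K * (10 ^ m * y') ^ 2 + 1) := by rw [hsol, hyfac]
      _ = (u * y') ^ 2 * 10 ^ (K + 2 * m) + u ^ 2 := by
          rw [pow_add, pow_mul']; ring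
      _ = (u * y') ^ 2 * 10 ^ (d + s) + u ^ 2 := by rw [hds]
end
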